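/- In the simplex category Δ, for 0 ≤ k ≤ n the square consisting of the object [n], the subobjects {0,...,k} ≅ [k] and {k,...,n} ≅ [n-k], and their intersection {k} ≅ [0] (with the evident inclusion maps) is both a pullback and a pushout square in Δ (a biCartesian square). -/

import Mathlib

/-!
The segments `{0,…,k}` and `{k,…,k+l}` cover `[k+l]` and meet only in `k`. Hence a monotone map
out of `[k+l]` is the same as a pair of monotone maps out of the two segments that agree at `k`,
which is the pushout property, and two elements of the segments with the same image in `[k+l]`
are `k ∈ [k]` and `0 ∈ [l]`, which is the pullback property.
-/

open CategoryTheory Limits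

namespace Fin

variable {α : Type*} [Preorder α] {k l : ℕ}

def glue (f : Fin (k + 1) →o α) (g : Fin (l + 1) →o α) (h : f (Fin.last k) = g 0) :
    Fin (k + l + 1) →o α where
  toFun i := if hi : (i : ℕ) ≤ k then f ⟨i, by omega⟩ else g ⟨i - k, by omega⟩
  monotone' a b (hab : (a : ℕ) ≤ b) := by
    dsimp only
    split_ifs with ha hb hb
    · exact f.monotone (Fin.mk_le_mk.2 hab)
    · calc f ⟨a, _⟩ ≤ f (Fin.last k) := f.monotone (Fin.mk_le_mk.2 ha)
        _ = g 0 := h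
        _ ≤ g _ := g.monotone (Fin.zero_le _)
    · omega
    · exact g.monotone (Fin.mk_le_mk.2 (by omega))

lemma glue_apply (f : Fin (k + 1) →o α) (g : Fin (l + 1) →o α) (h : f (Fin.last k) = g 0)
    (i : Fin (k + l + 1)) :
    glue f g h i = if hi : (i : ℕ) ≤ k then f ⟨i, by omega⟩ else g ⟨i - k, by omega⟩ :=
  rfl

lemma glue_apply_castLE (f : Fin (k + 1) →o α) (g : Fin (l + 1) →o α) (h : f (Fin.last k) = g 0)
    (i : Fin (k + 1)) :
    glue f g h (Fin.castLE (Nat.add_le_add_right (Nat.le_add_right k l) 1) i) = f i :=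
  dif_pos (Nat.le_of_lt_succ i.isLt)

lemma glue_apply_add (f : Fin (k + 1) →o α) (g : Fin (l + 1) →o α) (h : f (Fin.last k) = g 0)
    (j : Fin (l + 1)) : glue f g h ⟨k + j, Nat.add_lt_add_left j.isLt k⟩ = g j := by
  rw [glue_apply]
  split_ifs with hj
  · obtain rfl : j = 0 := Fin.ext (by simp at hj; omega)
    exact (congrArg f (Fin.ext (by simp))).trans h
  · exact congrArg g (Fin.ext (by simp))

end Fin

namespace SimplexCategory

open Simplicial

variable (k l : ℕ)

def initialIncl : ⦋k⦌ ⟶ ⦋k + l⦌ :=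
  mkHom ⟨Fin.castLE (Nat.add_le_add_right (Nat.le_add_right k l) 1), fun _ _ h => h⟩

def finalIncl : ⦋l⦌ ⟶ ⦋k + l⦌ :=
  mkHom ⟨fun i => ⟨k + i, Nat.add_lt_add_left i.isLt k⟩, fun _ _ h => Nat.add_le_add_left h k⟩

@[simp]
lemma initialIncl_apply_val (i : Fin (k + 1)) : ((initialIncl k l).toOrderHom i : ℕ) = i := rfl

@[simp]
lemma finalIncl_apply_val (j : Fin (l + 1)) : ((finalIncl k l).toOrderHom j : ℕ) = k + j := rfl

lemma mem_range_initialIncl_or_finalIncl (i : Fin (k + l + 1)) :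
    i ∈ Set.range (initialIncl k l).toOrderHom ∨ i ∈ Set.range (finalIncl k l).toOrderHom := by
  by_cases hi : (i : ℕ) ≤ k
  · exact .inl ⟨⟨i, Nat.lt_succ_of_le hi⟩, rfl⟩
  · exact .inr ⟨⟨i - k, by dsimp; omega⟩, Fin.ext (by simp; omega)⟩

lemma initialIncl_apply_eq_finalIncl_apply_iff (i : Fin (k + 1)) (j : Fin (l + 1)) :
    (initialIncl k l).toOrderHom i = (finalIncl k l).toOrderHom j ↔ i = Fin.last k ∧ j = 0 := by
  simp only [Fin.ext_iff, initialIncl_apply_val, finalIncl_apply_val, Fin.val_last, Fin.val_zero]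
  omega

lemma const_comp_initialIncl_eq_const_comp_finalIncl :
    const ⦋0⦌ ⦋k⦌ (Fin.last k) ≫ initialIncl k l = const ⦋0⦌ ⦋l⦌ 0 ≫ finalIncl k l := by
  simp only [const_comp, (initialIncl_apply_eq_finalIncl_apply_iff k l _ _).2 ⟨rfl, rfl⟩]

lemma hom_ext_of_initialIncl_of_finalIncl {X : SimplexCategory} {φ ψ : ⦋k + l⦌ ⟶ X}
    (h₁ : initialIncl k l ≫ φ = initialIncl k l ≫ ψ) (h₂ : finalIncl k l ≫ φ = finalIncl k l ≫ ψ) :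
    φ = ψ := by
  ext i : 3
  rcases mem_range_initialIncl_or_finalIncl k l i with ⟨j, rfl⟩ | ⟨j, rfl⟩
  · exact congr_toOrderHom_apply h₁ j
  · exact congr_toOrderHom_apply h₂ j

def glue {X : SimplexCategory} (u : ⦋k⦌ ⟶ X) (v : ⦋l⦌ ⟶ X)
    (h : u.toOrderHom (Fin.last k) = v.toOrderHom 0) : ⦋k + l⦌ ⟶ X :=
  Hom.mk (Fin.glue u.toOrderHom v.toOrderHom h)

lemma initialIncl_glue {X : SimplexCategory} (u : ⦋k⦌ ⟶ X) (v : ⦋l⦌ ⟶ X)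
    (h : u.toOrderHom (Fin.last k) = v.toOrderHom 0) : initialIncl k l ≫ glue k l u v h = u := by
  ext i : 3
  exact Fin.glue_apply_castLE _ _ h i

lemma finalIncl_glue {X : SimplexCategory} (u : ⦋k⦌ ⟶ X) (v : ⦋l⦌ ⟶ X)
    (h : u.toOrderHom (Fin.last k) = v.toOrderHom 0) : finalIncl k l ≫ glue k l u v h = v := by
  ext j : 3
  exact Fin.glue_apply_add _ _ h j

lemma eq_const_of_comp_initialIncl_eq_comp_finalIncl {X : SimplexCategory} {s : X ⟶ ⦋k⦌}
    {t : X ⟶ ⦋l⦌} (h : s ≫ initialIncl k l = t ≫ finalIncl k l) :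
    s = const X ⦋k⦌ (Fin.last k) ∧ t = const X ⦋l⦌ 0 := by
  have hst x := (initialIncl_apply_eq_finalIncl_apply_iff k l _ _).1 (congr_toOrderHom_apply h x)
  exact ⟨by ext x : 3; exact (hst x).1, by ext x : 3; exact (hst x).2⟩

def isColimitPushoutCocone :
    IsColimit (PushoutCocone.mk _ _ (const_comp_initialIncl_eq_const_comp_finalIncl k l)) :=
  PushoutCocone.IsColimit.mk _
    (fun s => glue k l s.inl s.inr (by simpa using congr_toOrderHom_apply s.condition 0))
    (fun s => initialIncl_glue k l _ _ _) (fun s => finalIncl_glue k l _ _ _)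
    (fun s m h₁ h₂ => hom_ext_of_initialIncl_of_finalIncl k l
      (by rw [h₁, initialIncl_glue]) (by rw [h₂, finalIncl_glue]))

def isLimitPullbackCone :
    IsLimit (PullbackCone.mk _ _ (const_comp_initialIncl_eq_const_comp_finalIncl k l)) :=
  PullbackCone.IsLimit.mk _ (fun s => const s.pt ⦋0⦌ 0)
    (fun s => (eq_const_of_comp_initialIncl_eq_comp_finalIncl k l s.condition).1.symm)
    (fun s => (eq_const_of_comp_initialIncl_eq_comp_finalIncl k l s.condition).2.symm)
    (fun _ _ _ _ => Subsingleton.elim _ _)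

end SimplexCategory

/-- In the simplex category `Δ`, for `0 ≤ k ≤ n` (writing `n = k + l`), the
square consisting of `[n]`, the subobjects `{0,...,k} ≅ [k]` and `{k,...,n} ≅ [l]`, and their
intersection `{k} ≅ [0]` — with the inclusions `[k] → [n]` (`i ↦ i`), `[l] → [n]`
(`i ↦ i + k`), and `[0] → [k]`, `[0] → [l]` hitting `k` and `0` respectively — is both a
pushout and a pullback square in `Δ` (a biCartesian square). -/
theorem stmt_16 (k l : ℕ) :
    IsPushout
        (SimplexCategory.const (SimplexCategory.mk 0) (SimplexCategory.mk k) (Fin.last k))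
        (SimplexCategory.const (SimplexCategory.mk 0) (SimplexCategory.mk l) 0)
        (SimplexCategory.mkHom
          ⟨Fin.castLE (by omega : k + 1 ≤ k + l + 1), fun _ _ h => h⟩)
        (SimplexCategory.mkHom
          ⟨fun i : Fin (l + 1) => (⟨k + (i : ℕ), by have := i.isLt; omega⟩ : Fin (k + l + 1)),
            fun a b hab => Nat.add_le_add_left hab k⟩) ∧
      IsPullback
        (SimplexCategory.const (SimplexCategory.mk 0) (SimplexCategory.mk k) (Fin.last k))
        (SimplexCategory.const (SimplexCategory.mk 0) (SimplexCategory.mk l) 0)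
        (SimplexCategory.mkHom
          ⟨Fin.castLE (by omega : k + 1 ≤ k + l + 1), fun _ _ h => h⟩)
        (SimplexCategory.mkHom
          ⟨fun i : Fin (l + 1) => (⟨k + (i : ℕ), by have := i.isLt; omega⟩ : Fin (k + l + 1)),
            fun a b hab => Nat.add_le_add_left hab k⟩) := by
  exact ⟨IsPushout.of_isColimit (SimplexCategory.isColimitPushoutCocone k l),
    IsPullback.of_isLimit (SimplexCategory.isLimitPullbackCone k l)⟩
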